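/- Let J be the free ℤ-module on basis t₁, …, t₁₈ with multiplication t_i · t_j = Σ_k (M_i)_{j,k} t_k, where M₁ = I, M₂, M₃, M₄ are the explicit 18×18 matrices from the paper, and the remaining M_j are the stated polynomial expressions in M₂, M₃, M₄. Then the ℤ-span of {t₁, t₄, t₁₀, t₁₆, t₁₈} is closed under multiplication, i.e., forms a subring of J containing the identity t₁. -/

import Mathlib

open Polynomial Matrix

def P2 : Matrix (Fin 18) (Fin 18) ℤ :=
  !![0, 1, 0, 0, 0, 0, 0, 0, 0, 0, 0, 0, 0, 0, 0, 0, 0, 0;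
  1, 1, 1, 1, 1, 0, 0, 0, 0, 0, 0, 0, 0, 0, 0, 0, 0, 0;
  0, 1, 1, 0, 1, 0, 1, 0, 0, 0, 0, 0, 0, 0, 0, 0, 0, 0;
  0, 1, 0, 0, 0, 1, 0, 0, 0, 0, 0, 0, 0, 0, 0, 0, 0, 0;
  0, 1, 1, 0, 2, 1, 1, 1, 1, 0, 0, 0, 0, 0, 0, 0, 0, 0;
  0, 0, 0, 1, 1, 1, 0, 0, 1, 1, 0, 0, 0, 0, 0, 0, 0, 0;
  0, 0, 1, 0, 1, 0, 0, 1, 0, 0, 1, 0, 0, 0, 0, 0, 0, 0;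
  0, 0, 0, 0, 1, 0, 1, 1, 1, 0, 1, 0, 1, 0, 0, 0, 0, 0;
  0, 0, 0, 0, 1, 1, 0, 1, 2, 0, 1, 1, 0, 1, 0, 0, 0, 0;
  0, 0, 0, 0, 0, 1, 0, 0, 0, 0, 0, 1, 0, 0, 0, 0, 0, 0;
  0, 0, 0, 0, 0, 0, 1, 1, 1, 0, 1, 0, 1, 1, 0, 0, 0, 0;
  0, 0, 0, 0, 0, 0, 0, 0, 1, 1, 0, 1, 0, 1, 0, 1, 0, 0;
  0, 0, 0, 0, 0, 0, 0, 1, 0, 0, 1, 0, 0, 1, 1, 0, 0, 0;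
  0, 0, 0, 0, 0, 0, 0, 0, 1, 0, 1, 1, 1, 2, 1, 0, 1, 0;
  0, 0, 0, 0, 0, 0, 0, 0, 0, 0, 0, 0, 1, 1, 1, 0, 1, 0;
  0, 0, 0, 0, 0, 0, 0, 0, 0, 0, 0, 1, 0, 0, 0, 0, 1, 0;
  0, 0, 0, 0, 0, 0, 0, 0, 0, 0, 0, 0, 0, 1, 1, 1, 1, 1;
  0, 0, 0, 0, 0, 0, 0, 0, 0, 0, 0, 0, 0, 0, 0, 0, 1, 0]
def P3 : Matrix (Fin 18) (Fin 18) ℤ :=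
  !![0, 0, 1, 0, 0, 0, 0, 0, 0, 0, 0, 0, 0, 0, 0, 0, 0, 0;
  0, 1, 1, 0, 1, 1, 0, 0, 0, 0, 0, 0, 0, 0, 0, 0, 0, 0;
  1, 1, 1, 0, 1, 0, 0, 1, 0, 0, 0, 0, 0, 0, 0, 0, 0, 0;
  0, 0, 0, 0, 1, 0, 0, 0, 0, 0, 0, 0, 0, 0, 0, 0, 0, 0;
  0, 1, 1, 1, 2, 1, 1, 1, 1, 0, 1, 0, 0, 0, 0, 0, 0, 0;
  0, 1, 0, 0, 1, 1, 0, 0, 1, 0, 0, 1, 0, 0, 0, 0, 0, 0;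
  0, 0, 0, 0, 1, 0, 1, 1, 1, 0, 0, 0, 0, 0, 0, 0, 0, 0;
  0, 0, 1, 0, 1, 0, 1, 1, 1, 0, 1, 0, 0, 1, 0, 0, 0, 0;
  0, 0, 0, 0, 1, 1, 1, 1, 2, 1, 1, 1, 1, 1, 0, 0, 0, 0;
  0, 0, 0, 0, 0, 0, 0, 0, 1, 0, 0, 0, 0, 0, 0, 0, 0, 0;
  0, 0, 0, 0, 1, 0, 0, 1, 1, 0, 1, 0, 1, 1, 1, 0, 0, 0;
  0, 0, 0, 0, 0, 1, 0, 0, 1, 0, 0, 1, 0, 1, 0, 0, 1, 0;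
  0, 0, 0, 0, 0, 0, 0, 0, 1, 0, 1, 0, 1, 1, 0, 0, 0, 0;
  0, 0, 0, 0, 0, 0, 0, 1, 1, 0, 1, 1, 1, 2, 1, 1, 1, 0;
  0, 0, 0, 0, 0, 0, 0, 0, 0, 0, 1, 0, 0, 1, 1, 0, 1, 1;
  0, 0, 0, 0, 0, 0, 0, 0, 0, 0, 0, 0, 0, 1, 0, 0, 0, 0;
  0, 0, 0, 0, 0, 0, 0, 0, 0, 0, 0, 1, 0, 1, 1, 0, 1, 0;
  0, 0, 0, 0, 0, 0, 0, 0, 0, 0, 0, 0, 0, 0, 1, 0, 0, 0]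
def P4 : Matrix (Fin 18) (Fin 18) ℤ :=
  !![0, 0, 0, 1, 0, 0, 0, 0, 0, 0, 0, 0, 0, 0, 0, 0, 0, 0;
  0, 1, 0, 0, 0, 0, 1, 0, 0, 0, 0, 0, 0, 0, 0, 0, 0, 0;
  0, 0, 0, 0, 1, 0, 0, 0, 0, 0, 0, 0, 0, 0, 0, 0, 0, 0;
  1, 0, 0, 1, 0, 0, 0, 0, 0, 1, 0, 0, 0, 0, 0, 0, 0, 0;
  0, 0, 1, 0, 1, 0, 0, 0, 1, 0, 0, 0, 0, 0, 0, 0, 0, 0;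
  0, 0, 0, 0, 0, 1, 0, 1, 0, 0, 0, 0, 0, 0, 0, 0, 0, 0;
  0, 1, 0, 0, 0, 0, 1, 0, 0, 0, 0, 0, 1, 0, 0, 0, 0, 0;
  0, 0, 0, 0, 0, 1, 0, 1, 0, 0, 1, 0, 0, 0, 0, 0, 0, 0;
  0, 0, 0, 0, 1, 0, 0, 0, 1, 0, 0, 0, 0, 1, 0, 0, 0, 0;
  0, 0, 0, 1, 0, 0, 0, 0, 0, 1, 0, 0, 0, 0, 0, 1, 0, 0;
  0, 0, 0, 0, 0, 0, 0, 1, 0, 0, 1, 1, 0, 0, 0, 0, 0, 0;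
  0, 0, 0, 0, 0, 0, 0, 0, 0, 0, 1, 1, 0, 0, 0, 0, 0, 0;
  0, 0, 0, 0, 0, 0, 1, 0, 0, 0, 0, 0, 1, 0, 0, 0, 1, 0;
  0, 0, 0, 0, 0, 0, 0, 0, 1, 0, 0, 0, 0, 1, 1, 0, 0, 0;
  0, 0, 0, 0, 0, 0, 0, 0, 0, 0, 0, 0, 0, 1, 0, 0, 0, 0;
  0, 0, 0, 0, 0, 0, 0, 0, 0, 1, 0, 0, 0, 0, 0, 1, 0, 1;
  0, 0, 0, 0, 0, 0, 0, 0, 0, 0, 0, 0, 1, 0, 0, 0, 1, 0;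
  0, 0, 0, 0, 0, 0, 0, 0, 0, 0, 0, 0, 0, 0, 0, 1, 0, 0]

def P1 : Matrix (Fin 18) (Fin 18) ℤ := 1
def P5 : Matrix (Fin 18) (Fin 18) ℤ := -1 - P2 - P3 - P4 + P2 ^ 2
def P6 : Matrix (Fin 18) (Fin 18) ℤ := 1 + P4 - P2 ^ 2 + P2 * P3
def P7 : Matrix (Fin 18) (Fin 18) ℤ := -P2 + P2 * P4
def P8 : Matrix (Fin 18) (Fin 18) ℤ := P4 - P2 ^ 2 + P3 ^ 2
def P9 : Matrix (Fin 18) (Fin 18) ℤ :=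
  1 + P2 + P3 - P2 ^ 2 - 2 * P2 * P3 - 2 * P2 * P4 - P3 ^ 2 + P2 ^ 3
def P10 : Matrix (Fin 18) (Fin 18) ℤ := -1 - P4 + P4 ^ 2
def P11 : Matrix (Fin 18) (Fin 18) ℤ :=
  1 + 2 * P2 + P2 * P4 - P3 ^ 2 - P2 ^ 3 + P2 ^ 2 * P3
def P12 : Matrix (Fin 18) (Fin 18) ℤ :=
  -2 - 2 * P2 - P4 + 2 * P2 ^ 2 + P2 * P3 + 2 * P2 * P4 + P3 ^ 2 - P2 ^ 3 -
    P2 ^ 2 * P3 + P2 * P3 ^ 2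
def P13 : Matrix (Fin 18) (Fin 18) ℤ := -2 * P2 * P4 + P2 * P4 ^ 2
def P14 : Matrix (Fin 18) (Fin 18) ℤ :=
  -2 - 2 * P2 - 2 * P3 - P4 + 2 * P2 ^ 2 + 2 * P2 * P3 + P3 ^ 2 -
    2 * P2 ^ 2 * P3 + P3 ^ 3
def P15 : Matrix (Fin 18) (Fin 18) ℤ :=
  3 + 3 * P2 + 5 * P3 + 3 * P4 - P2 ^ 2 + 4 * P2 * P3 + 6 * P2 * P4 + P3 ^ 2 -
    P4 ^ 2 - P2 ^ 3 + 2 * P2 ^ 2 * P3 - 3 * P2 * P3 ^ 2 - 2 * P2 * P4 ^ 2 -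
    4 * P3 ^ 3 + P2 ^ 2 * P3 ^ 2
def P16 : Matrix (Fin 18) (Fin 18) ℤ := 1 - P4 - 2 * P4 ^ 2 + P4 ^ 3
def P17 : Matrix (Fin 18) (Fin 18) ℤ :=
  5 + 6 * P2 + 2 * P3 + 4 * P4 - 4 * P2 ^ 2 - 3 * P2 * P3 + 2 * P2 * P4 -
    P4 ^ 2 + 6 * P2 ^ 2 * P3 - 3 * P2 * P3 ^ 2 - P2 * P4 ^ 2 - 2 * P3 ^ 3 -
    P2 ^ 2 * P3 ^ 2 + P2 * P3 ^ 3
def P18 : Matrix (Fin 18) (Fin 18) ℤ := 3 * P4 - 3 * P4 ^ 3 + P4 ^ 4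

/-- The family of all eighteen structure–constant matrices. -/
def PJ : Fin 18 → Matrix (Fin 18) (Fin 18) ℤ :=
  ![P1, P2, P3, P4, P5, P6, P7, P8, P9, P10, P11, P12, P13, P14, P15, P16,
    P17, P18]

/-- The multiplication of J(A₉): tᵢ · tⱼ = Σ_k (Mᵢ)_(j,k) t_k, extended bilinearly. -/
def mulJ (a b : Fin 18 → ℤ) : Fin 18 → ℤ :=
  fun k => ∑ i : Fin 18, ∑ j : Fin 18, a i * b j * PJ i j k

/-- The basis vectors t₁, …, t₁₈ (zero-indexed). -/
def t (i : Fin 18) : Fin 18 → ℤ := Pi.single i 1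

/-! The structure matrices of t₁, t₄, t₁₀, t₁₆, t₁₈ are 1, M₄, M₄² - M₄ - 1,
M₄³ - 2M₄² - M₄ + 1 and M₄⁴ - 3M₄³ + 3M₄, all polynomials in M₄. The rows of M₄ indexed by
S = {1, 4, 10, 16, 18} are supported on S, so M₄ is block triangular for S, and hence so is every
polynomial in M₄: right multiplication by it preserves the vectors supported on S, which form the
span in question. As a · b = Σᵢ aᵢ (b Mᵢ), closure follows. That t₁ is the identity amounts to
M₁ = 1 and to row 1 of each Mᵢ being eᵢ. -/

section SupportInSet

variable {R m : Type*} {s : Set m}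

theorem Pi.mem_span_single_image_iff [DecidableEq m] [Semiring R] [Finite m] {v : m → R} :
    v ∈ Submodule.span R ((fun i => Pi.single i (1 : R)) '' s) ↔ ∀ k ∉ s, v k = 0 := by
  rw [← funext (Pi.basisFun_apply R m), Module.Basis.mem_span_image]
  simp [Set.subset_def, not_imp_comm]

theorem Matrix.blockTriangular_mem_iff [Zero R] {M : Matrix m m R} :
    M.BlockTriangular (· ∈ s) ↔ ∀ i ∈ s, ∀ j ∉ s, M i j = 0 := by
  simp only [BlockTriangular, lt_iff_le_not_ge, le_Prop_eq, Classical.not_imp]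
  exact ⟨fun h i hi j hj => h ⟨fun _ => hi, hi, hj⟩, fun h i j hij => h i hij.2.1 j hij.2.2⟩

theorem Matrix.vecMul_mem_span_single_image [DecidableEq m] [Semiring R] [Fintype m] {v : m → R}
    {M : Matrix m m R} (hM : M.BlockTriangular (· ∈ s))
    (hv : v ∈ Submodule.span R ((fun i => Pi.single i (1 : R)) '' s)) :
    v ᵥ* M ∈ Submodule.span R ((fun i => Pi.single i (1 : R)) '' s) := by
  rw [Pi.mem_span_single_image_iff] at hv ⊢
  intro k hk
  refine Finset.sum_eq_zero fun i _ => ?_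
  dsimp only
  by_cases hi : i ∈ s
  · rw [blockTriangular_mem_iff.1 hM i hi k hk, mul_zero]
  · rw [hv i hi, zero_mul]

end SupportInSet

lemma mulJ_eq_vecMul (a b : Fin 18 → ℤ) : mulJ a b = a ᵥ* .of fun i => b ᵥ* PJ i := by
  ext k
  simp [mulJ, vecMul, dotProduct, Finset.mul_sum, mul_assoc]

lemma t_zero_mulJ (a : Fin 18 → ℤ) : mulJ (t 0) a = a := by
  rw [mulJ_eq_vecMul, t, single_one_vecMul]
  exact vecMul_one a

lemma mulJ_t_zero (a : Fin 18 → ℤ) : mulJ a (t 0) = a := by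
  have h : Matrix.of (fun i => PJ i 0) = 1 := by decide +kernel
  simp only [mulJ_eq_vecMul, t, single_one_vecMul]
  exact h ▸ vecMul_one a

lemma P4_blockTriangular : P4.BlockTriangular (· ∈ ({0, 3, 9, 15, 17} : Set (Fin 18))) := by
  rw [blockTriangular_mem_iff]
  -- with `P4` folded, `decide` cannot find the `Decidable` instance for its entries
  simp only [P4, of_apply]
  decide +kernel

lemma PJ_mem_adjoin_P4 :
    ∀ i ∈ ({0, 3, 9, 15, 17} : Set (Fin 18)), PJ i ∈ Algebra.adjoin ℤ {P4} := by
  have h (p : ℤ[X]) : aeval P4 p ∈ Algebra.adjoin ℤ {P4} := aeval_mem_adjoin_singleton ℤ P4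
  simp only [Set.mem_insert_iff, Set.mem_singleton_iff]
  rintro i (rfl | rfl | rfl | rfl | rfl)
  · exact one_mem _
  · exact Algebra.self_mem_adjoin_singleton ℤ P4
  · convert h (X ^ 2 - X - 1) using 1; simp [PJ, P10]; abel
  · convert h (X ^ 3 - 2 * X ^ 2 - X + 1) using 1; simp [PJ, P16, map_ofNat]; abel
  · convert h (X ^ 4 - 3 * X ^ 3 + 3 * X) using 1; simp [PJ, P18, map_ofNat]; abel

/-- The ℤ-span of {t₁, t₄, t₁₀, t₁₆, t₁₈} is closed under multiplication and
contains the identity t₁ of J(A₉). -/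
theorem stmt16 :
    (∀ a b : Fin 18 → ℤ,
        a ∈ Submodule.span ℤ ({t 0, t 3, t 9, t 15, t 17} : Set (Fin 18 → ℤ)) →
        b ∈ Submodule.span ℤ ({t 0, t 3, t 9, t 15, t 17} : Set (Fin 18 → ℤ)) →
        mulJ a b ∈
          Submodule.span ℤ ({t 0, t 3, t 9, t 15, t 17} : Set (Fin 18 → ℤ))) ∧
    (∀ a : Fin 18 → ℤ, mulJ (t 0) a = a ∧ mulJ a (t 0) = a) := by
  refine ⟨fun a b ha hb => ?_, fun a => ⟨t_zero_mulJ a, mulJ_t_zero a⟩⟩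
  set s : Set (Fin 18) := {0, 3, 9, 15, 17}
  have hs : ({t 0, t 3, t 9, t 15, t 17} : Set (Fin 18 → ℤ)) = (fun i => Pi.single i 1) '' s := by
    simp [s, t, Set.image_insert_eq]
  have hPJ (i : Fin 18) (hi : i ∈ s) : (PJ i).BlockTriangular (· ∈ s) :=
    Algebra.adjoin_le (S := blockTriangularSubalgebra ℤ ℤ (· ∈ s))
      (Set.singleton_subset_iff.2 P4_blockTriangular) (PJ_mem_adjoin_P4 i hi)
  rw [hs] at ha hb ⊢
  rw [mulJ_eq_vecMul]
  refine vecMul_mem_span_single_image (blockTriangular_mem_iff.2 fun i hi => ?_) ha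
  exact Pi.mem_span_single_image_iff.1 (vecMul_mem_span_single_image (hPJ i hi) hb)
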